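/- Under Assumptions 1 and 2, if 0 < p₀({M}) < 1 and q({M}) = 0, then for every 0 ≤ a < M the restricted measures (p_i)_{[0,a]} converge in total variation to (p*)_{[0,a]}; as a consequence, (p_i)_{i≥0} converges weakly to p*. -/

import Mathlib

/-!
By Assumption 1 and induction, the restriction to `[0,M)` of the sequence `p̂ᵢ` started at `δ_M`
stays below that of `pᵢ`. Hence `pᵢ{M} ≤ p̂ᵢ{M}`, and since `q{M} = 0` both atoms are multiplied at
each step by `(1-β) s(M,·)`, with `s(M,pᵢ) ≥ s(M,p̂ᵢ) ≥ 1`. So the ratio `pᵢ{M} / p̂ᵢ{M}` is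
nondecreasing, positive and at most `1`, while by Assumption 2 it grows by the factor `c(a,ε)` at
every step where `pᵢ[0,a] ≥ p̂ᵢ[0,a] + ε`; this can happen only finitely often. On `[0,a]` the
sandwich `p̂ᵢ ≤ pᵢ` with a mass gap below `ε` then transfers the total variation convergence of `p̂ᵢ`
to `pᵢ`. Weak convergence follows from the portmanteau theorem for the π-system of measurable sets
that contain or avoid some `(a,M]`: their masses are determined by the restriction to `[0,a]`.
-/

open MeasureTheory Set Filter

/-- Selective advantage `s(x,u) = w(x,u) / ∫ w(y,u) u(dy)` if the mean fitness is
positive, and `1` otherwise. -/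
noncomputable def sel (w : ℝ → MeasureTheory.Measure ℝ → ℝ)
    (u : MeasureTheory.Measure ℝ) (x : ℝ) : ℝ :=
  if 0 < ∫ y, w y u ∂u then w x u / ∫ y, w y u ∂u else 1

/-- The sequence of type distributions:
`p_i(dx) = (1-β) s(x,p_{i-1}) p_{i-1}(dx) + β q(dx)`. -/
noncomputable def evol (w : ℝ → MeasureTheory.Measure ℝ → ℝ) (β : ℝ)
    (q p₀ : MeasureTheory.Measure ℝ) : ℕ → MeasureTheory.Measure ℝ
  | 0 => p₀
  | i + 1 =>
      ENNReal.ofReal (1 - β) •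
          ((evol w β q p₀ i).withDensity fun x =>
            ENNReal.ofReal (sel w (evol w β q p₀ i) x))
        + ENNReal.ofReal β • q

/-- Convergence in total variation (uniform convergence over all measurable sets). -/
def TendstoTV (p : ℕ → MeasureTheory.Measure ℝ) (μ : MeasureTheory.Measure ℝ) : Prop :=
  ∀ ε : ℝ, 0 < ε → ∃ N : ℕ, ∀ i ≥ N, ∀ A : Set ℝ, MeasurableSet A →
    |((p i) A).toReal - (μ A).toReal| < ε

/-- Weak convergence of measures (tested against bounded continuous functions). -/
def TendstoWeak (p : ℕ → MeasureTheory.Measure ℝ) (μ : MeasureTheory.Measure ℝ) : Prop :=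
  ∀ f : BoundedContinuousFunction ℝ ℝ,
    Filter.Tendsto (fun i => ∫ x, f x ∂(p i)) Filter.atTop (nhds (∫ x, f x ∂μ))

/-- Assumption 1: if `v` restricted to `[0,M)` is a component of `u` restricted to `[0,M)`,
then `s(·,u) ≥ s(·,v)` on `[0,M]`. -/
def Assumption1 (M : ℝ) (w : ℝ → MeasureTheory.Measure ℝ → ℝ) : Prop :=
  ∀ u v : MeasureTheory.Measure ℝ,
    IsProbabilityMeasure u → IsProbabilityMeasure v →
    u ((Set.Icc 0 M)ᶜ) = 0 → v ((Set.Icc 0 M)ᶜ) = 0 →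
    v.restrict (Set.Ico 0 M) ≤ u.restrict (Set.Ico 0 M) →
    ∀ x ∈ Set.Icc (0:ℝ) M, sel w v x ≤ sel w u x

/-- Assumption 2: for every `0 ≤ a < M` and `0 < ε < 1` there is `c(a,ε) > 1` such that
`s(M,u) ≥ c(a,ε) s(M,v)` whenever `v_{[0,M)} ≺ u_{[0,M)}` and `D_u(a) ≥ D_v(a) + ε`. -/
def Assumption2 (M : ℝ) (w : ℝ → MeasureTheory.Measure ℝ → ℝ) : Prop :=
  ∀ a : ℝ, 0 ≤ a → a < M → ∀ ε : ℝ, 0 < ε → ε < 1 → ∃ c : ℝ, 1 < c ∧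
    ∀ u v : MeasureTheory.Measure ℝ,
      IsProbabilityMeasure u → IsProbabilityMeasure v →
      u ((Set.Icc 0 M)ᶜ) = 0 → v ((Set.Icc 0 M)ᶜ) = 0 →
      v.restrict (Set.Ico 0 M) ≤ u.restrict (Set.Ico 0 M) →
      (v (Set.Icc 0 a)).toReal + ε ≤ (u (Set.Icc 0 a)).toReal →
      c * sel w v M ≤ sel w u M

open scoped Topology

lemma withDensity_mono_measure {α : Type*} [MeasurableSpace α] {μ ν : Measure α} (h : μ ≤ ν)
    (f : α → ENNReal) : μ.withDensity f ≤ ν.withDensity f :=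
  Measure.le_iff.2 fun s hs => by
    rw [withDensity_apply _ hs, withDensity_apply _ hs]
    exact lintegral_mono' (Measure.restrict_mono le_rfl h) le_rfl

lemma abs_toReal_sub_le_of_le {α : Type*} [MeasurableSpace α] {μ ν : Measure α}
    [IsFiniteMeasure μ] (h : ν ≤ μ) {s : Set α} (hs : MeasurableSet s) :
    |(μ s).toReal - (ν s).toReal| ≤ (μ univ).toReal - (ν univ).toReal := by
  have := isFiniteMeasure_of_le μ h
  have hsub : ∀ t, MeasurableSet t → (μ t).toReal - (ν t).toReal = ((μ - ν) t).toReal :=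
    fun t ht => by
      rw [Measure.sub_apply ht h, ENNReal.toReal_sub_of_le (h t) (measure_ne_top _ _)]
  rw [hsub s hs, hsub univ MeasurableSet.univ, abs_of_nonneg ENNReal.toReal_nonneg]
  exact ENNReal.toReal_mono (measure_ne_top _ _) (measure_mono (subset_univ s))

lemma toReal_singleton_eq_one_sub_Ico {M : ℝ} (hM : 0 ≤ M) (u : Measure ℝ)
    [IsProbabilityMeasure u] (hu : u (Icc 0 M)ᶜ = 0) :
    (u {M}).toReal = 1 - (u (Ico 0 M)).toReal := by
  have hsplit : u (Ico 0 M) + u {M} = 1 := by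
    rw [← measure_union (by simp) (measurableSet_singleton M), Ico_union_right hM,
      (prob_compl_eq_zero_iff measurableSet_Icc).1 hu]
  have := congrArg ENNReal.toReal hsplit
  rw [ENNReal.toReal_add (measure_ne_top _ _) (measure_ne_top _ _), ENNReal.toReal_one] at this
  linarith

lemma eventually_not_of_ratio_jump {ρ r : ℕ → ℝ} {P : ℕ → Prop} {c B : ℝ} (hc : 1 < c)
    (hρ0 : 0 < ρ 0) (hρB : ∀ i, ρ i ≤ B) (hρ : ∀ i, ρ (i + 1) = r i * ρ i)
    (hr : ∀ i, 1 ≤ r i) (hP : ∀ i, P i → c ≤ r i) : ∀ᶠ i in atTop, ¬ P i := by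
  have hpos : ∀ i, 0 < ρ i := fun i => by
    induction i with
    | zero => exact hρ0
    | succ i ih => rw [hρ]; exact mul_pos (by linarith [hr i]) ih
  have hmono : Monotone ρ := monotone_nat_of_le_succ fun i => by
    rw [hρ]; exact le_mul_of_one_le_left (hpos i).le (hr i)
  by_contra hfreq
  rw [not_eventually, frequently_atTop] at hfreq
  have hgrow : ∀ k : ℕ, ∃ i, c ^ k * ρ 0 ≤ ρ i := fun k => by
    induction k with
    | zero => exact ⟨0, by simp⟩
    | succ k ih =>
      obtain ⟨i, hi⟩ := ih
      obtain ⟨j, hij, hj⟩ := hfreq i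
      refine ⟨j + 1, ?_⟩
      calc c ^ (k + 1) * ρ 0 = c * (c ^ k * ρ 0) := by ring
        _ ≤ r j * ρ j :=
          mul_le_mul (hP j (not_not.mp hj)) (hi.trans (hmono hij)) (by positivity) (zero_le_one.trans (hr j))
        _ = ρ (j + 1) := (hρ j).symm
  obtain ⟨k, hk⟩ := pow_unbounded_of_one_lt (B / ρ 0) hc
  obtain ⟨i, hi⟩ := hgrow k
  have := (div_lt_iff₀ hρ0).mp hk
  linarith [hρB i]

namespace TendstoTV

variable {p : ℕ → Measure ℝ} {μ : Measure ℝ}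

lemma restrict (h : TendstoTV p μ) {K : Set ℝ} (hK : MeasurableSet K) :
    TendstoTV (fun i => (p i).restrict K) (μ.restrict K) := fun ε hε => by
  obtain ⟨N, hN⟩ := h ε hε
  exact ⟨N, fun i hi A hA => by
    simpa only [Measure.restrict_apply hA] using hN i hi (A ∩ K) (hA.inter hK)⟩

lemma of_eventually_dist_lt {ν : ℕ → Measure ℝ} (h : TendstoTV ν μ)
    (hclose : ∀ ε > 0, ∀ᶠ i in atTop, ∀ A, MeasurableSet A →
      |(p i A).toReal - (ν i A).toReal| < ε) :
    TendstoTV p μ := fun ε hε => by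
  obtain ⟨N₁, hN₁⟩ := h (ε / 2) (half_pos hε)
  obtain ⟨N₂, hN₂⟩ := eventually_atTop.1 (hclose (ε / 2) (half_pos hε))
  refine ⟨max N₁ N₂, fun i hi A hA => ?_⟩
  have h₁ := hN₁ i (le_of_max_le_left hi) A hA
  have h₂ := hN₂ i (le_of_max_le_right hi) A hA
  calc |(p i A).toReal - (μ A).toReal|
      ≤ |(p i A).toReal - (ν i A).toReal| + |(ν i A).toReal - (μ A).toReal| :=
        abs_sub_le _ _ _
    _ < ε := by linarith

lemma tendsto_toReal_apply (h : TendstoTV p μ) {A : Set ℝ} (hA : MeasurableSet A) :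
    Tendsto (fun i => (p i A).toReal) atTop (𝓝 (μ A).toReal) :=
  Metric.tendsto_atTop.2 fun ε hε => by
    obtain ⟨N, hN⟩ := h ε hε
    exact ⟨N, fun i hi => by rw [Real.dist_eq]; exact hN i hi A hA⟩

lemma apply_eq_zero [IsFiniteMeasure μ] (h : TendstoTV p μ) {S : Set ℝ} (hS : MeasurableSet S)
    (hp : ∀ i, p i S = 0) : μ S = 0 := by
  by_contra hne
  have hpos : 0 < (μ S).toReal := ENNReal.toReal_pos hne (measure_ne_top μ S)
  obtain ⟨N, hN⟩ := h _ hpos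
  have := hN N le_rfl S hS
  rw [hp, ENNReal.toReal_zero, zero_sub, abs_neg, abs_of_pos hpos] at this
  exact lt_irrefl _ this

end TendstoTV

section Selection

variable {w : ℝ → Measure ℝ → ℝ}

lemma sel_nonneg (hw : ∀ x u, 0 ≤ w x u) (u : Measure ℝ) (x : ℝ) : 0 ≤ sel w u x := by
  unfold sel
  split_ifs with h
  · exact div_nonneg (hw x u) h.le
  · exact zero_le_one

lemma lintegral_ofReal_sel (hw : ∀ x u, 0 ≤ w x u) (u : Measure ℝ) [IsProbabilityMeasure u] :
    ∫⁻ x, ENNReal.ofReal (sel w u x) ∂u = 1 := by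
  unfold sel
  split_ifs with h
  · have hint : Integrable (fun y => w y u) u := by
      by_contra hni
      rw [integral_undef hni] at h
      exact h.false
    simp_rw [div_eq_mul_inv, ENNReal.ofReal_mul (hw _ u)]
    rw [lintegral_mul_const' _ _ ENNReal.ofReal_ne_top,
      ← ofReal_integral_eq_lintegral_ofReal hint (ae_of_all _ (hw · u)),
      ← ENNReal.ofReal_mul h.le, mul_inv_cancel₀ h.ne', ENNReal.ofReal_one]
  · simp

lemma sel_dirac_self (x : ℝ) : sel w (Measure.dirac x) x = 1 := by
  unfold sel
  split_ifs with h
  · rw [integral_dirac] at h ⊢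
    exact div_self h.ne'
  · rfl

end Selection

section Evolution

variable {w : ℝ → Measure ℝ → ℝ} {β : ℝ} {q p₀ : Measure ℝ}

lemma isProbabilityMeasure_evol (hw : ∀ x u, 0 ≤ w x u) (hβ : β ∈ Icc (0:ℝ) 1)
    [IsProbabilityMeasure q] [IsProbabilityMeasure p₀] (i : ℕ) :
    IsProbabilityMeasure (evol w β q p₀ i) := by
  induction i with
  | zero => rwa [evol]
  | succ i ih =>
    constructor
    simp only [evol, Measure.add_apply, Measure.smul_apply, smul_eq_mul,
      withDensity_apply _ MeasurableSet.univ, Measure.restrict_univ, lintegral_ofReal_sel hw,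
      measure_univ, mul_one]
    rw [← ENNReal.ofReal_add (by linarith [hβ.2]) hβ.1, sub_add_cancel, ENNReal.ofReal_one]

lemma evol_apply_eq_zero {S : Set ℝ} (hS : MeasurableSet S) (hq : q S = 0) (hp₀ : p₀ S = 0)
    (i : ℕ) : evol w β q p₀ i S = 0 := by
  induction i with
  | zero => exact hp₀
  | succ i ih => simp [evol, withDensity_apply _ hS, Measure.restrict_eq_zero.mpr ih, hq]

lemma evol_succ_apply_singleton_toReal (hw : ∀ x u, 0 ≤ w x u) (hβ : β ≤ 1) {x : ℝ}
    (hqx : q {x} = 0) (i : ℕ) :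
    (evol w β q p₀ (i + 1) {x}).toReal =
      (1 - β) * (sel w (evol w β q p₀ i) x * (evol w β q p₀ i {x}).toReal) := by
  simp [evol, withDensity_apply _ (measurableSet_singleton x), hqx, ENNReal.toReal_mul,
    ENNReal.toReal_ofReal (sub_nonneg.mpr hβ), ENNReal.toReal_ofReal (sel_nonneg hw _ x), mul_comm]

end Evolution

section Assumptions

variable {M : ℝ} {w : ℝ → Measure ℝ → ℝ}

lemma dirac_compl_Icc (hM : 0 ≤ M) : Measure.dirac M (Icc 0 M)ᶜ = 0 := by
  simp [hM]

lemma dirac_restrict_Ico : (Measure.dirac M).restrict (Ico 0 M) = 0 := by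
  simp

lemma one_le_sel_right (hM : 0 ≤ M) (hA1 : Assumption1 M w) (u : Measure ℝ)
    [IsProbabilityMeasure u] (hu : u (Icc 0 M)ᶜ = 0) : 1 ≤ sel w u M := by
  have h := hA1 u (Measure.dirac M) ‹_› inferInstance hu (dirac_compl_Icc hM)
    (by simp [dirac_restrict_Ico, Measure.zero_le]) M ⟨hM, le_rfl⟩
  rwa [sel_dirac_self] at h

lemma withDensity_sel_restrict_Ico_mono (hA1 : Assumption1 M w) {u v : Measure ℝ}
    [IsProbabilityMeasure u] [IsProbabilityMeasure v]
    (hu : u (Icc 0 M)ᶜ = 0) (hv : v (Icc 0 M)ᶜ = 0)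
    (hle : v.restrict (Ico 0 M) ≤ u.restrict (Ico 0 M)) :
    (v.withDensity fun x => ENNReal.ofReal (sel w v x)).restrict (Ico 0 M) ≤
      (u.withDensity fun x => ENNReal.ofReal (sel w u x)).restrict (Ico 0 M) := by
  rw [restrict_withDensity measurableSet_Ico, restrict_withDensity measurableSet_Ico]
  calc (v.restrict (Ico 0 M)).withDensity (fun x => ENNReal.ofReal (sel w v x))
      ≤ (v.restrict (Ico 0 M)).withDensity (fun x => ENNReal.ofReal (sel w u x)) :=
        withDensity_mono <| ae_restrict_of_forall_mem measurableSet_Ico fun x hx =>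
          ENNReal.ofReal_le_ofReal <| hA1 u v ‹_› ‹_› hu hv hle x (Ico_subset_Icc_self hx)
    _ ≤ _ := withDensity_mono_measure hle _

end Assumptions

section Comparison

variable {M : ℝ} {w : ℝ → Measure ℝ → ℝ} {β : ℝ} {q p₀ : Measure ℝ}

lemma evol_dirac_restrict_Ico_le (hM : 0 ≤ M) (hβ : β ∈ Icc (0:ℝ) 1)
    [IsProbabilityMeasure q] [IsProbabilityMeasure p₀]
    (hq : q (Icc 0 M)ᶜ = 0) (hp₀ : p₀ (Icc 0 M)ᶜ = 0)
    (hw : ∀ x u, 0 ≤ w x u) (hA1 : Assumption1 M w) (i : ℕ) :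
    (evol w β q (Measure.dirac M) i).restrict (Ico 0 M) ≤
      (evol w β q p₀ i).restrict (Ico 0 M) := by
  induction i with
  | zero => simp [evol, dirac_restrict_Ico, Measure.zero_le]
  | succ i ih =>
    have := isProbabilityMeasure_evol hw hβ (q := q) (p₀ := p₀) i
    have := isProbabilityMeasure_evol hw hβ (q := q) (p₀ := Measure.dirac M) i
    simp only [evol, Measure.restrict_add, Measure.restrict_smul]
    gcongr _ • ?_ + _
    exact withDensity_sel_restrict_Ico_mono hA1
      (evol_apply_eq_zero measurableSet_Icc.compl hq hp₀ i)
      (evol_apply_eq_zero measurableSet_Icc.compl hq (dirac_compl_Icc hM) i) ih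

lemma toReal_evol_apply_singleton_le (hM : 0 ≤ M) (hβ : β ∈ Icc (0:ℝ) 1)
    [IsProbabilityMeasure q] [IsProbabilityMeasure p₀]
    (hq : q (Icc 0 M)ᶜ = 0) (hp₀ : p₀ (Icc 0 M)ᶜ = 0)
    (hw : ∀ x u, 0 ≤ w x u) (hA1 : Assumption1 M w) (i : ℕ) :
    (evol w β q p₀ i {M}).toReal ≤ (evol w β q (Measure.dirac M) i {M}).toReal := by
  have := isProbabilityMeasure_evol hw hβ (q := q) (p₀ := p₀) i
  have := isProbabilityMeasure_evol hw hβ (q := q) (p₀ := Measure.dirac M) i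
  have hIco := Measure.le_iff'.1 (evol_dirac_restrict_Ico_le hM hβ hq hp₀ hw hA1 i) (Ico 0 M)
  rw [Measure.restrict_apply_self, Measure.restrict_apply_self] at hIco
  rw [toReal_singleton_eq_one_sub_Ico hM _ (evol_apply_eq_zero measurableSet_Icc.compl hq hp₀ i),
    toReal_singleton_eq_one_sub_Ico hM _
      (evol_apply_eq_zero measurableSet_Icc.compl hq (dirac_compl_Icc hM) i)]
  linarith [ENNReal.toReal_mono (measure_ne_top _ _) hIco]

lemma eventually_evol_apply_Icc_lt (hM : 0 < M) (hβ : β ∈ Ioo (0:ℝ) 1)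
    [IsProbabilityMeasure q] [IsProbabilityMeasure p₀]
    (hq : q (Icc 0 M)ᶜ = 0) (hp₀ : p₀ (Icc 0 M)ᶜ = 0)
    (hw : ∀ x u, 0 ≤ w x u) (hA1 : Assumption1 M w) (hA2 : Assumption2 M w)
    (h0M : 0 < p₀ {M}) (hqM : q {M} = 0)
    {a : ℝ} (ha : 0 ≤ a) (haM : a < M) {ε : ℝ} (hε0 : 0 < ε) (hε1 : ε < 1) :
    ∀ᶠ i in atTop, (evol w β q p₀ i (Icc 0 a)).toReal <
      (evol w β q (Measure.dirac M) i (Icc 0 a)).toReal + ε := by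
  set p := evol w β q p₀
  set ph := evol w β q (Measure.dirac M)
  have hβ' : β ∈ Icc (0:ℝ) 1 := Ioo_subset_Icc_self hβ
  have hprob : ∀ i, IsProbabilityMeasure (p i) := isProbabilityMeasure_evol hw hβ'
  have hprobh : ∀ i, IsProbabilityMeasure (ph i) := isProbabilityMeasure_evol hw hβ'
  have hsupp : ∀ i, p i (Icc 0 M)ᶜ = 0 := evol_apply_eq_zero measurableSet_Icc.compl hq hp₀
  have hsupph : ∀ i, ph i (Icc 0 M)ᶜ = 0 :=
    evol_apply_eq_zero measurableSet_Icc.compl hq (dirac_compl_Icc hM.le)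
  have hcpl : ∀ i, (ph i).restrict (Ico 0 M) ≤ (p i).restrict (Ico 0 M) :=
    evol_dirac_restrict_Ico_le hM.le hβ' hq hp₀ hw hA1
  have hsel : ∀ i, sel w (ph i) M ≤ sel w (p i) M := fun i =>
    hA1 _ _ (hprob i) (hprobh i) (hsupp i) (hsupph i) (hcpl i) M ⟨hM.le, le_rfl⟩
  have hselh : ∀ i, 0 < sel w (ph i) M := fun i =>
    one_pos.trans_le (one_le_sel_right hM.le hA1 _ (hsupph i))
  have hx_succ : ∀ i, (p (i + 1) {M}).toReal = (1 - β) * (sel w (p i) M * (p i {M}).toReal) :=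
    evol_succ_apply_singleton_toReal hw hβ.2.le hqM
  have hy_succ : ∀ i, (ph (i + 1) {M}).toReal = (1 - β) * (sel w (ph i) M * (ph i {M}).toReal) :=
    evol_succ_apply_singleton_toReal hw hβ.2.le hqM
  have hyM : ∀ i, 0 < (ph i {M}).toReal := fun i => by
    induction i with
    | zero => simp [ph, evol]
    | succ i ih => rw [hy_succ]; have := hβ.2; have := hselh i; positivity
  set ρ : ℕ → ℝ := fun i => (p i {M}).toReal / (ph i {M}).toReal
  have hρ : ∀ i, ρ (i + 1) = sel w (p i) M / sel w (ph i) M * ρ i := fun i => by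
    simp only [ρ, hx_succ, hy_succ]
    have := hselh i; have := hyM i; have : 1 - β ≠ 0 := by linarith [hβ.2]
    field_simp
  obtain ⟨c, hc1, hc⟩ := hA2 a ha haM ε hε0 hε1
  refine (eventually_not_of_ratio_jump hc1
    (div_pos (ENNReal.toReal_pos h0M.ne' (measure_ne_top _ _)) (hyM 0))
    (fun i => div_le_one_of_le₀ (toReal_evol_apply_singleton_le hM.le hβ' hq hp₀ hw hA1 i)
      (hyM i).le) hρ
    (fun i => (one_le_div (hselh i)).2 (hsel i))
    (fun i hgap => (le_div_iff₀ (hselh i)).2 (hc _ _ (hprob i) (hprobh i) (hsupp i) (hsupph i)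
      (hcpl i) hgap))).mono fun i hi => not_le.mp hi

lemma tendstoTV_evol_restrict_Icc (hM : 0 < M) (hβ : β ∈ Ioo (0:ℝ) 1)
    [IsProbabilityMeasure q] [IsProbabilityMeasure p₀]
    (hq : q (Icc 0 M)ᶜ = 0) (hp₀ : p₀ (Icc 0 M)ᶜ = 0)
    (hw : ∀ x u, 0 ≤ w x u) (hA1 : Assumption1 M w) (hA2 : Assumption2 M w)
    (h0M : 0 < p₀ {M}) (hqM : q {M} = 0) {pstar : Measure ℝ}
    (hpstar : TendstoTV (evol w β q (Measure.dirac M)) pstar) {a : ℝ} (ha : 0 ≤ a) (haM : a < M) :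
    TendstoTV (fun i => (evol w β q p₀ i).restrict (Icc 0 a)) (pstar.restrict (Icc 0 a)) := by
  have hβ' : β ∈ Icc (0:ℝ) 1 := Ioo_subset_Icc_self hβ
  have hsub : Icc 0 a ⊆ Ico 0 M := Icc_subset_Ico_right haM
  refine (hpstar.restrict measurableSet_Icc).of_eventually_dist_lt fun ε hε => ?_
  filter_upwards [eventually_evol_apply_Icc_lt hM hβ hq hp₀ hw hA1 hA2 h0M hqM ha haM
    (lt_min hε one_half_pos) ((min_le_right _ _).trans_lt one_half_lt_one)] with i hgap A hA
  have := isProbabilityMeasure_evol hw hβ' (q := q) (p₀ := p₀) i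
  have hle := Measure.restrict_mono le_rfl
    (evol_dirac_restrict_Ico_le hM.le hβ' hq hp₀ hw hA1 i) (s := Icc 0 a)
  rw [Measure.restrict_restrict_of_subset hsub, Measure.restrict_restrict_of_subset hsub] at hle
  calc _ ≤ _ := abs_toReal_sub_le_of_le hle hA
    _ < ε := by
      simp only [Measure.restrict_apply_univ]
      linarith [min_le_left ε (1 / 2)]

end Comparison

section Weak

variable {M : ℝ}

def settledNear (M : ℝ) : Set (Set ℝ) :=
  {s | MeasurableSet s ∧ ∃ a ∈ Ico 0 M, Disjoint s (Ioc a M) ∨ Ioc a M ⊆ s}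

lemma isPiSystem_settledNear : IsPiSystem (settledNear M) := by
  rintro s ⟨hs, a, ha, hsa⟩ t ⟨ht, b, hb, htb⟩ -
  refine ⟨hs.inter ht, ?_⟩
  rcases hsa with hsa | hsa
  · exact ⟨a, ha, Or.inl (hsa.mono_left inter_subset_left)⟩
  rcases htb with htb | htb
  · exact ⟨b, hb, Or.inl (htb.mono_left inter_subset_right)⟩
  refine ⟨max a b, ⟨le_max_of_le_left ha.1, max_lt ha.2 hb.2⟩, Or.inr (subset_inter ?_ ?_)⟩
  · exact (Ioc_subset_Ioc_left (le_max_left a b)).trans hsa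
  · exact (Ioc_subset_Ioc_left (le_max_right a b)).trans htb

lemma exists_mem_settledNear_mem_nhds_subset (hM : 0 < M) {u : Set ℝ} (hu : IsOpen u) {x : ℝ}
    (hx : x ∈ u) : ∃ s ∈ settledNear M, s ∈ 𝓝 x ∧ s ⊆ u := by
  obtain ⟨r, hr, hball⟩ := Metric.isOpen_iff.1 hu x hx
  rcases eq_or_ne x M with rfl | hxM
  · refine ⟨u, ⟨hu.measurableSet, max 0 (x - r), ⟨le_max_left _ _, max_lt hM (by linarith)⟩,
      Or.inr fun y hy => hball ?_⟩, hu.mem_nhds hx, subset_rfl⟩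
    rw [Metric.mem_ball, Real.dist_eq, abs_sub_lt_iff]
    constructor <;> linarith [le_max_right 0 (x - r), hy.1, hy.2]
  · set δ := dist x M / 2
    have hδ : 0 < δ := half_pos (dist_pos.2 hxM)
    refine ⟨u ∩ Metric.ball x δ, ⟨hu.measurableSet.inter measurableSet_ball, max 0 (M - δ),
      ⟨le_max_left _ _, max_lt hM (by linarith)⟩, Or.inl ?_⟩,
      inter_mem (hu.mem_nhds hx) (Metric.ball_mem_nhds x hδ), inter_subset_left⟩
    rw [Set.disjoint_left]
    rintro y ⟨-, hxy⟩ ⟨hy₁, hy₂⟩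
    have hyM : dist y M < δ := by
      rw [Real.dist_eq, abs_sub_lt_iff]
      constructor <;> linarith [le_max_right 0 (M - δ)]
    rw [Metric.mem_ball, dist_comm] at hxy
    linarith [dist_triangle x y M, show dist x M = 2 * δ by simp only [δ]; ring]

lemma apply_eq_restrict_Icc_apply_of_disjoint {ν : Measure ℝ} (hν : ν (Icc 0 M)ᶜ = 0) {a : ℝ}
    (haM : a ≤ M) {s : Set ℝ} (hs : MeasurableSet s) (hsa : Disjoint s (Ioc a M)) :
    ν s = ν.restrict (Icc 0 a) s := by
  rw [Measure.restrict_apply hs, ← measure_inter_conull hν]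
  congr 1
  refine Subset.antisymm ?_ (inter_subset_inter_right _ (Icc_subset_Icc_right haM))
  rintro y ⟨hys, hy0, hyM⟩
  exact ⟨hys, hy0, not_lt.1 fun hya => Set.disjoint_left.1 hsa hys ⟨hya, hyM⟩⟩

variable {p : ℕ → Measure ℝ} {μ : Measure ℝ} [∀ i, IsProbabilityMeasure (p i)]
  [IsProbabilityMeasure μ]

lemma tendsto_toReal_apply_of_mem_settledNear (hp : ∀ i, p i (Icc 0 M)ᶜ = 0)
    (hμ : μ (Icc 0 M)ᶜ = 0)
    (h : ∀ a, 0 ≤ a → a < M →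
      TendstoTV (fun i => (p i).restrict (Icc 0 a)) (μ.restrict (Icc 0 a)))
    {s : Set ℝ} (hs : s ∈ settledNear M) :
    Tendsto (fun i => (p i s).toReal) atTop (𝓝 (μ s).toReal) := by
  obtain ⟨hsm, a, ha, hsa⟩ := hs
  have hdisj : ∀ t, MeasurableSet t → Disjoint t (Ioc a M) →
      Tendsto (fun i => (p i t).toReal) atTop (𝓝 (μ t).toReal) := fun t ht htd => by
    simp only [apply_eq_restrict_Icc_apply_of_disjoint (hp _) ha.2.le ht htd,
      apply_eq_restrict_Icc_apply_of_disjoint hμ ha.2.le ht htd]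
    exact (h a ha.1 ha.2).tendsto_toReal_apply ht
  rcases hsa with hsa | hsa
  · exact hdisj s hsm hsa
  · have := (hdisj sᶜ hsm.compl (disjoint_compl_left_iff_subset.2 hsa)).const_sub 1
    simpa only [prob_compl_eq_one_sub hsm, ENNReal.toReal_sub_of_le prob_le_one ENNReal.one_ne_top,
      ENNReal.toReal_one, sub_sub_cancel] using this

lemma tendstoWeak_of_tendstoTV_restrict_Icc (hM : 0 < M) (hp : ∀ i, p i (Icc 0 M)ᶜ = 0)
    (hμ : μ (Icc 0 M)ᶜ = 0)
    (h : ∀ a, 0 ≤ a → a < M →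
      TendstoTV (fun i => (p i).restrict (Icc 0 a)) (μ.restrict (Icc 0 a))) :
    TendstoWeak p μ := by
  let P : ℕ → ProbabilityMeasure ℝ := fun i => ⟨p i, inferInstance⟩
  have hP : Tendsto P atTop (𝓝 ⟨μ, inferInstance⟩) :=
    isPiSystem_settledNear.tendsto_probabilityMeasure_of_tendsto_of_mem (fun s hs => hs.1)
      (fun u hu x hx => exists_mem_settledNear_mem_nhds_subset hM hu hx)
      fun s hs => NNReal.tendsto_coe.1 (tendsto_toReal_apply_of_mem_settledNear hp hμ h hs)
  exact ProbabilityMeasure.tendsto_iff_forall_integral_tendsto.1 hP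

end Weak

theorem stmt2_general (M : ℝ) (hM : 0 < M) (β : ℝ) (hβ : β ∈ Set.Ioo (0:ℝ) 1)
    (q : MeasureTheory.Measure ℝ) [IsProbabilityMeasure q] (hq : q ((Set.Icc 0 M)ᶜ) = 0)
    (w : ℝ → MeasureTheory.Measure ℝ → ℝ)
    (hw_nonneg : ∀ x u, 0 ≤ w x u)
    (hA1 : Assumption1 M w) (hA2 : Assumption2 M w)
    (pstar : MeasureTheory.Measure ℝ) [IsProbabilityMeasure pstar]
    (hpstar : TendstoTV (evol w β q (MeasureTheory.Measure.dirac M)) pstar)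
    (p₀ : MeasureTheory.Measure ℝ) [IsProbabilityMeasure p₀]
    (hp₀ : p₀ ((Set.Icc 0 M)ᶜ) = 0)
    (h0M : 0 < p₀ ({M} : Set ℝ))
    (hqM : q ({M} : Set ℝ) = 0) :
    (∀ a : ℝ, 0 ≤ a → a < M →
      TendstoTV (fun i => (evol w β q p₀ i).restrict (Set.Icc 0 a))
        (pstar.restrict (Set.Icc 0 a))) ∧
    TendstoWeak (evol w β q p₀) pstar := by
  have htv : ∀ a : ℝ, 0 ≤ a → a < M →
      TendstoTV (fun i => (evol w β q p₀ i).restrict (Icc 0 a)) (pstar.restrict (Icc 0 a)) :=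
    fun a ha haM => tendstoTV_evol_restrict_Icc hM hβ hq hp₀ hw_nonneg hA1 hA2 h0M hqM hpstar ha haM
  have := isProbabilityMeasure_evol hw_nonneg (Ioo_subset_Icc_self hβ) (q := q) (p₀ := p₀)
  have hpstar_supp : pstar (Icc 0 M)ᶜ = 0 := hpstar.apply_eq_zero measurableSet_Icc.compl
    (evol_apply_eq_zero measurableSet_Icc.compl hq (dirac_compl_Icc hM.le))
  exact ⟨htv, tendstoWeak_of_tendstoTV_restrict_Icc hM
    (evol_apply_eq_zero measurableSet_Icc.compl hq hp₀) hpstar_supp htv⟩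

/-- Theorem 7 of the paper. Under Assumptions 1 and 2, if
`0 < p₀({M}) < 1` and `q({M}) = 0`, then for every `0 ≤ a < M` the restrictions
`(p_i)_{[0,a]}` converge in total variation to `(p*)_{[0,a]}`; consequently `(p_i)`
converges weakly to `p*`. -/
theorem stmt2 (M : ℝ) (hM : 0 < M) (β : ℝ) (hβ : β ∈ Set.Ioo (0:ℝ) 1)
    (q : MeasureTheory.Measure ℝ) [IsProbabilityMeasure q] (hq : q ((Set.Icc 0 M)ᶜ) = 0)
    (w : ℝ → MeasureTheory.Measure ℝ → ℝ)
    (hw_nonneg : ∀ x u, 0 ≤ w x u)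
    (hw_meas : ∀ u, Measurable fun x => w x u)
    (hA1 : Assumption1 M w) (hA2 : Assumption2 M w)
    (pstar : MeasureTheory.Measure ℝ) [IsProbabilityMeasure pstar]
    (hpstar : TendstoTV (evol w β q (MeasureTheory.Measure.dirac M)) pstar)
    (p₀ : MeasureTheory.Measure ℝ) [IsProbabilityMeasure p₀]
    (hp₀ : p₀ ((Set.Icc 0 M)ᶜ) = 0)
    (h0M : 0 < p₀ ({M} : Set ℝ)) (h1M : p₀ ({M} : Set ℝ) < 1)
    (hqM : q ({M} : Set ℝ) = 0) :
    (∀ a : ℝ, 0 ≤ a → a < M →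
      TendstoTV (fun i => (evol w β q p₀ i).restrict (Set.Icc 0 a))
        (pstar.restrict (Set.Icc 0 a))) ∧
    TendstoWeak (evol w β q p₀) pstar :=
  stmt2_general M hM β hβ q hq w hw_nonneg hA1 hA2 pstar hpstar p₀ hp₀ h0M hqM
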